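/- Let G be a 1-walk regular graph on n vertices with adjacency matrix A. Let M, N be nonzero positive semidefinite matrices with M ∘ A ≤ 0 (entrywise), N ∘ (J − I − A) = 0, and N ∘ A ≥ 0 (entrywise). Then n ≥ (tr JM)(tr JN)/((tr M)(tr N)). -/

import Mathlib

/-!
Let `A` be the adjacency matrix and `J` the all-ones matrix. Walk-regularity for walks of length
two makes `G` regular of some degree `d`, so `A J = J A = d J`; for all lengths it makes every
polynomial in `A` constant on the diagonal and constant on the edges.

Let `τ < 0` be the least eigenvalue of `A`. Compressing `A - τ I ⪰ 0` by the projection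
`I - J / n` gives `A - τ I - ((d - τ) / n) J ⪰ 0`; pairing with `M` and using `tr (A M) ≤ 0`
yields `(d - τ) tr (J M) ≤ n (-τ) tr M`. A polynomial `F = p(A)` vanishing on the other
eigenvalues is positive semidefinite with `F ∘ I = α I`, `F ∘ A = β A`; taking traces in
`A F = τ F` gives `α > 0` and `β d = τ α`. Since `N` is supported on `I + A`,
`0 ≤ tr (F N) = α tr N + β tr (A N)`, hence `(-τ) tr (J N) ≤ (d - τ) tr N`. Multiplying the two
bounds gives the claim.
-/

open Matrix Polynomial
open scoped ComplexOrder MatrixOrder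

namespace Matrix

theorem hadamard_eq_self_of_hadamard_allOnes_sub_eq_zero {m n α : Type*} [Ring α]
    {N B : Matrix m n α} (h : N ⊙ (of (fun _ _ => 1) - B) = 0) : N ⊙ B = N := by
  ext i j
  simpa [hadamard_apply, mul_sub, sub_eq_zero, eq_comm] using congr_fun₂ h i j

variable {m 𝕜 : Type*} [Fintype m] [RCLike 𝕜]

theorem trace_mul_hadamard {α : Type*} [CommSemiring α] (X Y Z : Matrix m m α) :
    trace (X * (Y ⊙ Z)) = trace ((X ⊙ Zᵀ) * Y) := by
  simp only [trace, diag, mul_apply, hadamard_apply, transpose_apply, mul_assoc, mul_comm (Z _ _)]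

-- `tr (X * Y) = 1ᴴ (X ⊙ Yᵀ) 1`, so this is the Schur product theorem.
theorem PosSemidef.trace_mul_nonneg {X Y : Matrix m m 𝕜} (hX : X.PosSemidef) (hY : Y.PosSemidef) :
    0 ≤ trace (X * Y) := by
  convert (hX.hadamard hY.transpose).dotProduct_mulVec_nonneg (fun _ => 1) using 1
  simp [dotProduct, mulVec, trace, mul_apply, hadamard_apply]

theorem PosSemidef.trace_pos {X : Matrix m m 𝕜} (hX : X.PosSemidef) (h : X ≠ 0) :
    0 < trace X :=
  hX.trace_nonneg.lt_of_ne fun h0 => h (hX.trace_eq_zero_iff.1 h0.symm)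

theorem lt_zero_of_posSemidef_sub_smul_one [DecidableEq m] {A : Matrix m m 𝕜} {τ : ℝ}
    (hA : A ≠ 0) (htr : trace A = 0) (hτ : (A - (τ : 𝕜) • 1).PosSemidef) : τ < 0 := by
  by_contra! h
  have hA' : A.PosSemidef := by
    simpa using hτ.add (PosSemidef.one.smul (RCLike.ofReal_nonneg (K := 𝕜) |>.2 h))
  exact hA (hA'.trace_eq_zero_iff.1 htr)

section Nonempty

variable [DecidableEq m] [Nonempty m]

-- The left side is `Q * P * Q` for the projection `Q = 1 - J / card m`.
theorem PosSemidef.sub_smul_allOnes {P : Matrix m m 𝕜} {μ : 𝕜} (hP : P.PosSemidef)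
    (hPJ : P * of (fun _ _ => 1) = μ • of fun _ _ => 1)
    (hJP : of (fun _ _ => 1) * P = μ • of fun _ _ => 1) :
    (P - (μ / Fintype.card m) • of fun _ _ => (1 : 𝕜)).PosSemidef := by
  set J : Matrix m m 𝕜 := of fun _ _ => 1
  have hn : (Fintype.card m : 𝕜) ≠ 0 := Nat.cast_ne_zero.2 Fintype.card_ne_zero
  have hJJ : J * J = (Fintype.card m : 𝕜) • J := by ext; simp [J, mul_apply]
  set Q := 1 - (Fintype.card m : 𝕜)⁻¹ • J
  have hQ : Qᴴ = Q := by ext i j; simp [Q, J, one_apply, eq_comm]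
  convert hP.conjTranspose_mul_mul_same Q using 1
  simp only [hQ, Q, sub_mul, mul_sub, Matrix.smul_mul, Matrix.mul_smul, one_mul, mul_one, hPJ, hJP,
    hJJ, smul_smul]
  match_scalars
  · rfl
  · field_simp
    ring

theorem PosSemidef.div_card_mul_trace_allOnes_mul_le {P M : Matrix m m 𝕜} {μ : 𝕜}
    (hP : P.PosSemidef) (hM : M.PosSemidef)
    (hPJ : P * of (fun _ _ => 1) = μ • of fun _ _ => 1)
    (hJP : of (fun _ _ => 1) * P = μ • of fun _ _ => 1) :
    μ / Fintype.card m * trace (of (fun _ _ => 1) * M) ≤ trace (P * M) := by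
  have h := (hP.sub_smul_allOnes hPJ hJP).trace_mul_nonneg hM
  rwa [sub_mul, trace_sub, smul_mul, trace_smul, sub_nonneg, smul_eq_mul] at h

end Nonempty

namespace IsHermitian

variable [DecidableEq m] {A : Matrix m m 𝕜}

theorem exists_aeval_posSemidef_eigen (hA : A.IsHermitian) {τ : ℝ} (hτ : τ ∈ spectrum ℝ A) :
    ∃ p : ℝ[X], (aeval A p).PosSemidef ∧ aeval A p ≠ 0 ∧
      A * aeval A p = (τ : 𝕜) • aeval A p := by
  set S := A.finite_real_spectrum.toFinset.erase τ
  set p : ℝ[X] := ∏ μ ∈ S, (X - C μ) ^ 2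
  have hp : ∀ x, p.eval x = ∏ μ ∈ S, (x - μ) ^ 2 := by simp [p, eval_prod]
  have hpτ : 0 < p.eval τ := by
    rw [hp]
    exact Finset.prod_pos fun μ hμ =>
      sq_pos_of_ne_zero (sub_ne_zero.2 (Finset.ne_of_mem_erase hμ).symm)
  have hpx : ∀ x ∈ spectrum ℝ A, x ≠ τ → p.eval x = 0 := fun x hx hne => by
    rw [hp]
    exact Finset.prod_eq_zero (Finset.mem_erase.2 ⟨hne, by simpa using hx⟩) (by simp)
  refine ⟨p, ?_⟩
  rw [← cfc_polynomial p A]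
  refine ⟨nonneg_iff_posSemidef.1 (cfc_nonneg fun x _ => ?_), fun h => ?_, ?_⟩
  · rw [hp]
    exact Finset.prod_nonneg fun μ _ => sq_nonneg _
  · have hp0 : (spectrum ℝ A).EqOn (fun x => p.eval x) 0 :=
      eqOn_of_cfc_eq_cfc (h.trans (cfc_zero ℝ A).symm)
    exact hpτ.ne' (hp0 hτ)
  · have h : cfc (fun x => x * p.eval x) A = cfc (fun x => τ * p.eval x) A :=
      cfc_congr fun x hx => by
        rcases eq_or_ne x τ with rfl | hne
        · rfl
        · simp [hpx x hx hne]
    rwa [cfc_mul (fun x => x) (fun x => p.eval x) A, cfc_id' ℝ A,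
      cfc_const_mul τ (fun x => p.eval x) A, RCLike.real_smul_eq_coe_smul (K := 𝕜)] at h

theorem exists_min_spectrum [Nonempty m] (hA : A.IsHermitian) :
    ∃ τ ∈ spectrum ℝ A, ∀ x ∈ spectrum ℝ A, τ ≤ x := by
  obtain ⟨i, -, hi⟩ := Finset.univ.exists_min_image hA.eigenvalues Finset.univ_nonempty
  rw [hA.spectrum_real_eq_range_eigenvalues]
  exact ⟨_, ⟨i, rfl⟩, by simpa using fun j => hi j (Finset.mem_univ j)⟩

theorem posSemidef_sub_smul_one (hA : A.IsHermitian) {τ : ℝ}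
    (hmin : ∀ x ∈ spectrum ℝ A, τ ≤ x) : (A - (τ : 𝕜) • 1).PosSemidef := by
  rw [← nonneg_iff_posSemidef, sub_nonneg, ← RCLike.real_smul_eq_coe_smul,
    ← Algebra.algebraMap_eq_smul_one]
  exact (algebraMap_le_iff_le_spectrum (a := A)).2 hmin

end IsHermitian

end Matrix

namespace SimpleGraph

variable {V R : Type*} {G : SimpleGraph V} [DecidableRel G.Adj] [CommSemiring R]

section Fintype

variable [Fintype V]

theorem trace_adjMatrix_mul (X : Matrix V V R) :
    trace (G.adjMatrix R * X) = ∑ i, ∑ j, (X ⊙ G.adjMatrix R) i j := by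
  rw [sum_hadamard_eq, transpose_adjMatrix, trace_mul_comm]

namespace IsRegularOfDegree

variable {d : ℕ}

theorem trace_adjMatrix_mul_self (hd : G.IsRegularOfDegree d) :
    trace (G.adjMatrix R * G.adjMatrix R) = Fintype.card V * d := by
  simp only [trace, diag, adjMatrix_mul_self_apply_self, hd.degree_eq, Finset.sum_const,
    Finset.card_univ, nsmul_eq_mul]

theorem adjMatrix_mul_allOnes (hd : G.IsRegularOfDegree d) :
    G.adjMatrix R * of (fun _ _ => 1) = (d : R) • of fun _ _ => 1 := by
  ext; simp [hd.degree_eq]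

theorem allOnes_mul_adjMatrix (hd : G.IsRegularOfDegree d) :
    of (fun _ _ => 1) * G.adjMatrix R = (d : R) • of fun _ _ => 1 := by
  ext; simp [hd.degree_eq]

end IsRegularOfDegree

end Fintype

variable [DecidableEq V]

variable (G R) in
/-- `G` is 1-walk regular iff every positive power of its adjacency matrix lies in this
submodule. -/
def diagEdgeConstSubmodule : Submodule R (Matrix V V R) where
  carrier := {X | ∃ α β : R, X ⊙ 1 = α • 1 ∧ X ⊙ G.adjMatrix R = β • G.adjMatrix R}
  add_mem' := by
    rintro X Y ⟨α, β, hX1, hXA⟩ ⟨α', β', hY1, hYA⟩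
    exact ⟨α + α', β + β', by rw [add_hadamard, hX1, hY1, add_smul],
      by rw [add_hadamard, hXA, hYA, add_smul]⟩
  zero_mem' := ⟨0, 0, by simp, by simp⟩
  smul_mem' := by
    rintro c X ⟨α, β, hX1, hXA⟩
    exact ⟨c * α, c * β, by rw [smul_hadamard, hX1, smul_smul],
      by rw [smul_hadamard, hXA, smul_smul]⟩

theorem one_mem_diagEdgeConstSubmodule : (1 : Matrix V V R) ∈ G.diagEdgeConstSubmodule R :=
  ⟨1, 0, by simp [one_hadamard], by simp⟩

variable [Fintype V]

theorem aeval_adjMatrix_mem_diagEdgeConstSubmodule {S : Type*} [CommSemiring S] [Algebra S R]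
    (hwalk : ∀ k, 0 < k → G.adjMatrix R ^ k ∈ G.diagEdgeConstSubmodule R) (p : S[X]) :
    aeval (G.adjMatrix R) p ∈ G.diagEdgeConstSubmodule R := by
  rw [aeval_eq_sum_range]
  refine Submodule.sum_mem _ fun k _ => Submodule.smul_of_tower_mem _ _ ?_
  rcases k.eq_zero_or_pos with rfl | hk
  · exact pow_zero (G.adjMatrix R) ▸ one_mem_diagEdgeConstSubmodule
  · exact hwalk k hk

theorem exists_isRegularOfDegree [CharZero R] (h : ∃ a : R, (G.adjMatrix R ^ 2) ⊙ 1 = a • 1) :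
    ∃ d, G.IsRegularOfDegree d := by
  obtain ⟨a, ha⟩ := h
  cases isEmpty_or_nonempty V
  · exact ⟨0, fun v => isEmptyElim v⟩
  have hdeg : ∀ v, (G.degree v : R) = a := fun v => by
    simpa only [sq, hadamard_apply, one_apply_eq, mul_one, Matrix.smul_apply, smul_eq_mul,
      adjMatrix_mul_self_apply_self] using congr_fun₂ ha v v
  exact ⟨G.degree (Classical.arbitrary V),
    fun v => Nat.cast_injective ((hdeg v).trans (hdeg _).symm)⟩

theorem trace_mul_eq_of_hadamard_one_add_adjMatrix {X N : Matrix V V R} {α β : R}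
    (hN : N ⊙ (1 + G.adjMatrix R) = N) (hX1 : X ⊙ 1 = α • 1)
    (hXA : X ⊙ G.adjMatrix R = β • G.adjMatrix R) :
    trace (X * N) = α * trace N + β * trace (G.adjMatrix R * N) := by
  calc trace (X * N) = trace (X * (N ⊙ (1 + G.adjMatrix R))) := by rw [hN]
    _ = _ := by
      rw [trace_mul_hadamard, transpose_add, transpose_one, transpose_adjMatrix, hadamard_add, hX1,
        hXA, add_mul, trace_add, smul_mul, smul_mul, one_mul, trace_smul, trace_smul, smul_eq_mul,
        smul_eq_mul]

theorem degree_mul_trace_add_nonneg {d : ℕ}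
    (hwalk : ∀ k, 0 < k → G.adjMatrix ℂ ^ k ∈ G.diagEdgeConstSubmodule ℂ)
    (hd : G.IsRegularOfDegree d) {τ : ℝ} (hτ : τ ∈ spectrum ℝ (G.adjMatrix ℂ))
    {N : Matrix V V ℂ} (hN : N.PosSemidef) (hNsupp : N ⊙ (1 + G.adjMatrix ℂ) = N) :
    0 ≤ d * trace N + τ * trace (G.adjMatrix ℂ * N) := by
  set A := G.adjMatrix ℂ
  obtain ⟨p, hFpsd, hF0, hAF⟩ := (G.isHermitian_adjMatrix ℂ).exists_aeval_posSemidef_eigen hτ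
  set F := aeval A p
  obtain ⟨α, β, hF1, hFA⟩ := aeval_adjMatrix_mem_diagEdgeConstSubmodule hwalk p
  have htrF : trace F = α * Fintype.card V := by
    simpa using trace_mul_eq_of_hadamard_one_add_adjMatrix (N := 1) (by simp [one_hadamard]) hF1 hFA
  have hn : (0 : ℂ) < Fintype.card V := (Nat.cast_nonneg _).lt_of_ne' fun hn =>
    (hFpsd.trace_pos hF0).ne' (by rw [htrF, hn, mul_zero])
  have hα : 0 < α := (mul_pos_iff_of_pos_right hn).1 (htrF ▸ hFpsd.trace_pos hF0)
  have hβ : β * d = τ * α := by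
    have h :=
      trace_mul_eq_of_hadamard_one_add_adjMatrix (N := A) (by simp [A, hadamard_add]) hF1 hFA
    rw [trace_mul_comm, hAF, trace_smul, htrF, trace_adjMatrix, hd.trace_adjMatrix_mul_self] at h
    exact mul_right_cancel₀ hn.ne' (by linear_combination -h)
  have hFN := hFpsd.trace_mul_nonneg hN
  rw [trace_mul_eq_of_hadamard_one_add_adjMatrix hNsupp hF1 hFA] at hFN
  refine le_of_mul_le_mul_left ?_ hα
  calc α * 0 ≤ d * (α * trace N + β * trace (A * N)) := by
        simpa using mul_nonneg (Nat.cast_nonneg d) hFN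
    _ = α * (d * trace N + τ * trace (A * N)) := by linear_combination trace (A * N) * hβ

theorem IsRegularOfDegree.sub_mul_trace_allOnes_mul_le {𝕜 : Type*} [RCLike 𝕜] [Nonempty V]
    {d : ℕ} (hd : G.IsRegularOfDegree d) {τ : ℝ} (hτ : (G.adjMatrix 𝕜 - (τ : 𝕜) • 1).PosSemidef)
    {M : Matrix V V 𝕜} (hM : M.PosSemidef) :
    (d - τ) * trace (of (fun _ _ => 1) * M) ≤
      Fintype.card V * (trace (G.adjMatrix 𝕜 * M) - τ * trace M) := by
  have h := hτ.div_card_mul_trace_allOnes_mul_le (μ := (d : 𝕜) - τ) hM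
    (by rw [sub_mul, hd.adjMatrix_mul_allOnes, smul_mul, one_mul, sub_smul])
    (by rw [mul_sub, hd.allOnes_mul_adjMatrix, Matrix.mul_smul, mul_one, sub_smul])
  rwa [sub_mul, trace_sub, smul_mul, one_mul, trace_smul, smul_eq_mul, div_mul_eq_mul_div,
    div_le_iff₀' (by simp [Fintype.card_pos])] at h

end SimpleGraph

theorem Complex.mul_add_div_mul_le_of_bounds {a c t e f n d τ : ℂ} (hn : 0 ≤ n) (hd : 0 ≤ d)
    (hτ : τ < 0) (hc : 0 < c) (ht : 0 < t) (he : 0 ≤ e) (hf : f ≤ 0)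
    (hM : (d - τ) * a ≤ n * (f - τ * c)) (hN : 0 ≤ d * t + τ * e) :
    a * (t + e) / (c * t) ≤ n := by
  have hu : 0 < -τ := neg_pos.2 hτ
  have hv : 0 < d - τ := sub_pos.2 (hτ.trans_le hd)
  have hMc : (d - τ) * a ≤ n * -τ * c :=
    hM.trans (by rw [mul_assoc, neg_mul]; exact mul_le_mul_of_nonneg_left (by simpa using hf) hn)
  have hNt : -τ * (t + e) ≤ (d - τ) * t := sub_nonneg.1 (by convert hN using 1; ring)
  have h := mul_le_mul hMc hNt (mul_nonneg hu.le (add_nonneg ht.le he))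
    (mul_nonneg (mul_nonneg hn hu.le) hc.le)
  rw [div_le_iff₀ (mul_pos hc ht)]
  refine le_of_mul_le_mul_left ?_ (mul_pos hu hv)
  convert h using 1 <;> ring

/-- Theorem for 1-walk regular graphs (condition (B)): if G is 1-walk regular with
adjacency matrix A, and M, N are nonzero PSD matrices with M ∘ A ≤ 0 entrywise,
N ∘ (J - I - A) = 0 and N ∘ A ≥ 0 entrywise, then
n ≥ (tr JM)(tr JN)/((tr M)(tr N)). -/
theorem one_walk_regular_ratio_bound_B {n : ℕ}
    (G : SimpleGraph (Fin n)) [DecidableRel G.Adj]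
    (hwalk : ∀ k : ℕ, 0 < k → ∃ a b : ℂ,
      Matrix.hadamard ((G.adjMatrix ℂ) ^ k) 1 = a • (1 : Matrix (Fin n) (Fin n) ℂ) ∧
      Matrix.hadamard ((G.adjMatrix ℂ) ^ k) (G.adjMatrix ℂ) = b • G.adjMatrix ℂ)
    (M N : Matrix (Fin n) (Fin n) ℂ)
    (hM : M.PosSemidef) (hN : N.PosSemidef)
    (hMnz : M ≠ 0) (hNnz : N ≠ 0)
    (hMA : ∀ i j, Matrix.hadamard M (G.adjMatrix ℂ) i j ≤ 0)
    (hNA : Matrix.hadamard N ((Matrix.of fun _ _ => (1 : ℂ)) - 1 - G.adjMatrix ℂ) = 0)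
    (hNA' : ∀ i j, 0 ≤ Matrix.hadamard N (G.adjMatrix ℂ) i j) :
    Matrix.trace ((Matrix.of fun _ _ => (1 : ℂ)) * M) *
        Matrix.trace ((Matrix.of fun _ _ => (1 : ℂ)) * N) /
      (Matrix.trace M * Matrix.trace N) ≤ (n : ℂ) := by
  set A := G.adjMatrix ℂ
  have : Nonempty (Fin n) := not_isEmpty_iff.1 fun _ => hMnz (Subsingleton.elim _ _)
  obtain ⟨d, hd⟩ : ∃ d, G.IsRegularOfDegree d := by
    obtain ⟨a, -, h, -⟩ := hwalk 2 two_pos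
    exact G.exists_isRegularOfDegree ⟨a, h⟩
  have hNsupp : N ⊙ (1 + A) = N :=
    hadamard_eq_self_of_hadamard_allOnes_sub_eq_zero (by rwa [← sub_sub])
  have hJN : trace (of (fun _ _ => 1) * N) = trace N + trace (A * N) := by
    simpa using G.trace_mul_eq_of_hadamard_one_add_adjMatrix (α := 1) (β := 1) hNsupp
      (by rw [one_smul]; exact of_one_hadamard _) (by rw [one_smul]; exact of_one_hadamard _)
  -- All that is used of the least eigenvalue is this; for the edgeless graph `-1` will do.
  obtain ⟨τ, hτ0, hAτ, hNτ⟩ : ∃ τ : ℝ, τ < 0 ∧ (A - (τ : ℂ) • 1).PosSemidef ∧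
      0 ≤ d * trace N + τ * trace (A * N) := by
    rcases eq_or_ne A 0 with hA0 | hA0
    · refine ⟨-1, by norm_num, by simpa [hA0] using PosSemidef.one, ?_⟩
      simpa [hA0] using mul_nonneg (Nat.cast_nonneg d) hN.trace_nonneg
    obtain ⟨τ, hτ, hmin⟩ := (G.isHermitian_adjMatrix ℂ).exists_min_spectrum
    have hAτ := (G.isHermitian_adjMatrix ℂ).posSemidef_sub_smul_one hmin
    exact ⟨τ, lt_zero_of_posSemidef_sub_smul_one hA0 (G.trace_adjMatrix ℂ) hAτ, hAτ,
      G.degree_mul_trace_add_nonneg hwalk hd hτ hN hNsupp⟩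
  have hMτ := hd.sub_mul_trace_allOnes_mul_le hAτ hM
  rw [Fintype.card_fin] at hMτ
  rw [hJN]
  exact Complex.mul_add_div_mul_le_of_bounds (Nat.cast_nonneg n) (Nat.cast_nonneg d)
    (Complex.real_lt_real.2 (by simpa using hτ0)) (hM.trace_pos hMnz) (hN.trace_pos hNnz)
    (G.trace_adjMatrix_mul N ▸ Finset.sum_nonneg fun i _ => Finset.sum_nonneg fun j _ => hNA' i j)
    (G.trace_adjMatrix_mul M ▸ Finset.sum_nonpos fun i _ => Finset.sum_nonpos fun j _ => hMA i j)
    hMτ hNτ
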